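/- If f is restricted strongly convex/smooth with parameters m_s, M_s at sparsity level s = k + k*, β* is k*-sparse, β^{(t)} is k-sparse with k ≥ k*, and η ∈ (0, 2m_s/M_s²), then the hard-thresholded gradient step β^{(t+1)} = Θ_k(β^{(t)} − η∇_S f(β^{(t)})) with S = supp(β^{(t)}) ∪ supp(β*) satisfies ‖β^{(t+1)} − β*‖ ≤ 1.62ρ‖β^{(t)} − β*‖ + 1.62η√s·‖∇f(β*)‖_∞, where ρ = √(1 − 2ηm_s + η²M_s²) < 1. -/

import Mathlib

open Finset

/-- ℓ₀ "norm": number of nonzero entries. -/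
noncomputable def l0 {p : ℕ} (v : Fin p → ℝ) : ℕ :=
  (Finset.univ.filter fun i => v i ≠ 0).card

/-- Euclidean norm. -/
noncomputable def norm2 {p : ℕ} (v : Fin p → ℝ) : ℝ :=
  Real.sqrt (∑ i, (v i) ^ 2)

/-- Inner product. -/
noncomputable def ip {p : ℕ} (v w : Fin p → ℝ) : ℝ := ∑ i, v i * w i

/-- Sup norm. -/
noncomputable def normInf {p : ℕ} (v : Fin p → ℝ) : ℝ :=
  ⨆ i, |v i|

/-- Gradient restricted to an index set S. -/
noncomputable def restr {p : ℕ} (S : Finset (Fin p)) (v : Fin p → ℝ) : Fin p → ℝ :=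
  fun i => if i ∈ S then v i else 0

/-- Support of a vector as a Finset. -/
noncomputable def suppF {p : ℕ} (v : Fin p → ℝ) : Finset (Fin p) :=
  Finset.univ.filter fun i => v i ≠ 0

/-! On `S = supp βᵗ ∪ supp β*`, a set of at most `s` indices, every difference of the points
involved is `s`-sparse. Restricted strong convexity then makes the restricted gradient strongly
monotone, `⟨∇_S f(βᵗ) - ∇_S f(β*), βᵗ - β*⟩ ≥ m_s ‖βᵗ - β*‖²`, and restricted smoothness makes it
`M_s`-Lipschitz. Expanding the square shows that the gradient step on `S` is a `ρ`-contraction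
towards `β*` up to the error `η ‖∇_S f(β*)‖ ≤ η √s ‖∇f(β*)‖_∞`, and hard thresholding costs the
factor `1.62`. -/

open Function
open scoped InnerProductSpace

section InnerProductSpace

variable {E : Type*} [NormedAddCommGroup E] [InnerProductSpace ℝ E]

theorem norm_sub_smul_le_of_inner_ge {x u : E} {m M η : ℝ} (hη : 0 ≤ η)
    (hm : m * ‖x‖ ^ 2 ≤ ⟪x, u⟫_ℝ) (hM : ‖u‖ ≤ M * ‖x‖) :
    ‖x - η • u‖ ≤ √(1 - 2 * η * m + η ^ 2 * M ^ 2) * ‖x‖ := by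
  have hM_sq : ‖u‖ ^ 2 ≤ M ^ 2 * ‖x‖ ^ 2 := by
    rw [← mul_pow]; exact pow_le_pow_left₀ (norm_nonneg u) hM 2
  have h_sq : ‖x - η • u‖ ^ 2 ≤ (1 - 2 * η * m + η ^ 2 * M ^ 2) * ‖x‖ ^ 2 := by
    rw [norm_sub_sq_real, inner_smul_right, norm_smul, Real.norm_of_nonneg hη, mul_pow]
    nlinarith [mul_le_mul_of_nonneg_left hm hη, mul_le_mul_of_nonneg_left hM_sq (sq_nonneg η)]
  calc ‖x - η • u‖ = √(‖x - η • u‖ ^ 2) := (Real.sqrt_sq (norm_nonneg _)).symm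
    _ ≤ √((1 - 2 * η * m + η ^ 2 * M ^ 2) * ‖x‖ ^ 2) := Real.sqrt_le_sqrt h_sq
    _ = √(1 - 2 * η * m + η ^ 2 * M ^ 2) * ‖x‖ := by
      rw [Real.sqrt_mul' _ (sq_nonneg _), Real.sqrt_sq (norm_nonneg _)]

end InnerProductSpace

theorem sqrt_one_sub_two_mul_add_sq_lt_one {m M η : ℝ} (hM : M ≠ 0) (hη : 0 < η)
    (hηm : η < 2 * m / M ^ 2) : √(1 - 2 * η * m + η ^ 2 * M ^ 2) < 1 := by
  have : η * M ^ 2 < 2 * m := (lt_div_iff₀ (by positivity)).mp hηm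
  rw [Real.sqrt_lt' one_pos]
  nlinarith [mul_lt_mul_of_pos_left this hη]

variable {p : ℕ}

theorem norm2_eq_norm (v : Fin p → ℝ) : norm2 v = ‖WithLp.toLp 2 v‖ := by
  simp [norm2, EuclideanSpace.norm_eq]

theorem ip_eq_inner (v w : Fin p → ℝ) : ip v w = ⟪WithLp.toLp 2 v, WithLp.toLp 2 w⟫_ℝ := by
  simp [ip, PiLp.inner_apply, mul_comm]

theorem norm2_nonneg (v : Fin p → ℝ) : 0 ≤ norm2 v := Real.sqrt_nonneg _

theorem ip_self (v : Fin p → ℝ) : ip v v = norm2 v ^ 2 := by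
  rw [ip_eq_inner, norm2_eq_norm, real_inner_self_eq_norm_sq]

theorem ip_comm (v w : Fin p → ℝ) : ip v w = ip w v := by
  simp [ip, mul_comm]

theorem ip_sub_left (u v w : Fin p → ℝ) : ip (u - v) w = ip u w - ip v w := by
  simp [ip, sub_mul]

theorem ip_sub_right (u v w : Fin p → ℝ) : ip u (v - w) = ip u v - ip u w := by
  simp [ip, mul_sub]

theorem ip_neg_right (v w : Fin p → ℝ) : ip v (-w) = -ip v w := by
  simp [ip]

theorem ip_smul_right (c : ℝ) (v w : Fin p → ℝ) : ip v (c • w) = c * ip v w := by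
  simp [ip, mul_sum, mul_left_comm]

theorem norm2_neg (v : Fin p → ℝ) : norm2 (-v) = norm2 v := by
  simp [norm2]

theorem norm2_smul (c : ℝ) (v : Fin p → ℝ) : norm2 (c • v) = |c| * norm2 v := by
  rw [norm2_eq_norm, norm2_eq_norm, WithLp.toLp_smul, norm_smul, Real.norm_eq_abs]

theorem l0_neg (v : Fin p → ℝ) : l0 (-v) = l0 v := by
  simp [l0]

theorem l0_le_card_of_support_subset {S : Finset (Fin p)} {v : Fin p → ℝ}
    (hv : support v ⊆ S) : l0 v ≤ S.card :=
  card_le_card fun i hi => hv (by simpa using hi)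

theorem support_subset_suppF (v : Fin p → ℝ) : support v ⊆ suppF v := by
  intro i hi; simpa [suppF] using hi

theorem support_restr_subset (S : Finset (Fin p)) (v : Fin p → ℝ) : support (restr S v) ⊆ S := by
  intro i hi
  by_contra h
  exact hi (if_neg h)

theorem ip_restr_of_support_subset {S : Finset (Fin p)} {v : Fin p → ℝ} (hv : support v ⊆ S)
    (w : Fin p → ℝ) : ip v (restr S w) = ip v w := by
  refine sum_congr rfl fun i _ => ?_
  by_cases hi : i ∈ S
  · simp [restr, hi]
  · simp [restr, hi, notMem_support.mp fun h => hi (hv h)]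

theorem abs_le_normInf (v : Fin p → ℝ) (i : Fin p) : |v i| ≤ normInf v :=
  le_ciSup (f := fun j => |v j|) (Set.finite_range _).bddAbove i

theorem normInf_nonneg (v : Fin p → ℝ) : 0 ≤ normInf v :=
  Real.iSup_nonneg fun i => abs_nonneg (v i)

theorem norm2_restr_le (S : Finset (Fin p)) (v : Fin p → ℝ) :
    norm2 (restr S v) ≤ √S.card * normInf v := by
  have h_sum : ∑ i, restr S v i ^ 2 ≤ S.card * normInf v ^ 2 := by
    calc ∑ i, restr S v i ^ 2 = ∑ i ∈ S, v i ^ 2 := by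
          simp [restr, ite_pow, sum_ite_mem]
      _ ≤ ∑ _i ∈ S, normInf v ^ 2 := sum_le_sum fun i _ => by
          rw [← sq_abs]; exact pow_le_pow_left₀ (abs_nonneg _) (abs_le_normInf v i) 2
      _ = S.card * normInf v ^ 2 := by rw [sum_const, nsmul_eq_mul]
  calc norm2 (restr S v) ≤ √(S.card * normInf v ^ 2) := Real.sqrt_le_sqrt h_sum
    _ = √S.card * normInf v := by
      rw [Real.sqrt_mul (Nat.cast_nonneg _), Real.sqrt_sq (normInf_nonneg v)]

def RestrictedStrongConvexSmooth (f : (Fin p → ℝ) → ℝ) (gradf : (Fin p → ℝ) → Fin p → ℝ)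
    (ms Ms : ℝ) (s : ℕ) : Prop :=
  ∀ β β' : Fin p → ℝ, l0 (β - β') ≤ s →
    ms / 2 * norm2 (β - β') ^ 2 ≤ f β - f β' - ip (gradf β') (β - β') ∧
      f β - f β' - ip (gradf β') (β - β') ≤ Ms / 2 * norm2 (β - β') ^ 2

namespace RestrictedStrongConvexSmooth

variable {f : (Fin p → ℝ) → ℝ} {gradf : (Fin p → ℝ) → Fin p → ℝ} {ms Ms : ℝ} {s : ℕ}
  {S : Finset (Fin p)} {β β' : Fin p → ℝ}

theorem strongMonotone (hf : RestrictedStrongConvexSmooth f gradf ms Ms s)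
    (h : l0 (β - β') ≤ s) : ms * norm2 (β - β') ^ 2 ≤ ip (gradf β - gradf β') (β - β') := by
  have h' : l0 (β' - β) ≤ s := by rwa [← neg_sub, l0_neg]
  have h₁ := (hf β β' h).1
  have h₂ := (hf β' β h').1
  rw [← neg_sub β, norm2_neg, ip_neg_right] at h₂
  rw [ip_sub_left]
  linarith

theorem norm2_restr_gradf_sub_le (hf : RestrictedStrongConvexSmooth f gradf ms Ms s)
    (hms : 0 ≤ ms) (hMs : 0 < Ms) (hS : S.card ≤ s) (hβ : support β ⊆ S)
    (hβ' : support β' ⊆ S) :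
    norm2 (restr S (gradf β - gradf β')) ≤ Ms * norm2 (β - β') := by
  -- compare f at the trial point β - Ms⁻¹ • u with f β (smoothness) and f β' (convexity)
  set u := restr S (gradf β - gradf β')
  have hl0 : ∀ v : Fin p → ℝ, support v ⊆ S → l0 v ≤ s := fun v hv =>
    (l0_le_card_of_support_subset hv).trans hS
  have hu : support u ⊆ S := support_restr_subset _ _
  have hΔ : support (β - β') ⊆ S := (support_sub _ _).trans (Set.union_subset hβ hβ')
  have hMu : support (Ms⁻¹ • u) ⊆ S := (support_smul_subset_right _ _).trans hu
  have h_wβ : β - Ms⁻¹ • u - β = -(Ms⁻¹ • u) := by abel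
  have h_wβ' : β - Ms⁻¹ • u - β' = (β - β') - Ms⁻¹ • u := by abel
  have h₁ := (hf (β - Ms⁻¹ • u) β (hl0 _ (by rwa [h_wβ, support_neg]))).2
  have h₂ := (hf (β - Ms⁻¹ • u) β' (hl0 _ (by
    rw [h_wβ']; exact (support_sub _ _).trans (Set.union_subset hΔ hMu)))).1
  have h₃ := (hf β β' (hl0 _ hΔ)).2
  have h_uu : ip (gradf β - gradf β') u = norm2 u ^ 2 := by
    rw [ip_comm, ← ip_restr_of_support_subset hu, ip_self]
  rw [h_wβ, norm2_neg, norm2_smul, ip_neg_right, ip_smul_right, abs_inv, abs_of_pos hMs] at h₁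
  rw [h_wβ', ip_sub_right, ip_smul_right] at h₂
  rw [ip_sub_left] at h_uu
  have h_convex : 0 ≤ ms / 2 * norm2 (β - β' - Ms⁻¹ • u) ^ 2 := by positivity
  have h_sum : Ms⁻¹ * norm2 u ^ 2
      ≤ Ms / 2 * (Ms⁻¹ * norm2 u) ^ 2 + Ms / 2 * norm2 (β - β') ^ 2 := by
    rw [← h_uu]; linarith
  have h_sq : norm2 u ^ 2 ≤ (Ms * norm2 (β - β')) ^ 2 := by
    field_simp at h_sum; nlinarith
  exact (pow_le_pow_iff_left₀ (norm2_nonneg _) (by positivity [norm2_nonneg (β - β')])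
    two_ne_zero).mp h_sq

theorem norm2_sub_smul_restr_sub_le (hf : RestrictedStrongConvexSmooth f gradf ms Ms s)
    (hms : 0 ≤ ms) (hMs : 0 < Ms) {η : ℝ} (hη : 0 ≤ η) (hS : S.card ≤ s)
    (hβ : support β ⊆ S) (hβ' : support β' ⊆ S) :
    norm2 (β - η • restr S (gradf β) - β')
      ≤ √(1 - 2 * η * ms + η ^ 2 * Ms ^ 2) * norm2 (β - β') + η * norm2 (restr S (gradf β')) := by
  set u := restr S (gradf β - gradf β')
  have hΔ : support (β - β') ⊆ S := (support_sub _ _).trans (Set.union_subset hβ hβ')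
  have h_split : β - η • restr S (gradf β) - β' = (β - β' - η • u) - η • restr S (gradf β') := by
    ext i
    by_cases hi : i ∈ S
    · simp [u, restr, hi]; ring
    · simp [u, restr, hi]
  have h_mono : ms * norm2 (β - β') ^ 2 ≤ ip (β - β') u := by
    rw [ip_restr_of_support_subset hΔ, ip_comm]
    exact hf.strongMonotone ((l0_le_card_of_support_subset hΔ).trans hS)
  have h_lip : norm2 u ≤ Ms * norm2 (β - β') := hf.norm2_restr_gradf_sub_le hms hMs hS hβ hβ'
  rw [ip_eq_inner, norm2_eq_norm] at h_mono
  rw [norm2_eq_norm, norm2_eq_norm] at h_lip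
  have h_contr := norm_sub_smul_le_of_inner_ge hη h_mono h_lip
  rw [h_split]
  simp only [norm2_eq_norm, WithLp.toLp_sub, WithLp.toLp_smul] at h_contr ⊢
  calc _ ≤ _ := norm_sub_le _ _
    _ ≤ _ := by rw [norm_smul, Real.norm_of_nonneg hη]; gcongr

end RestrictedStrongConvexSmooth

theorem iht_one_step_contraction_general
    (p k kstar s : ℕ) (hks : kstar ≤ k) (hs : s = k + kstar)
    (f : (Fin p → ℝ) → ℝ) (gradf : (Fin p → ℝ) → (Fin p → ℝ))
    (ms Ms : ℝ) (hms : 0 < ms) (hmM : ms ≤ Ms)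
    (hrsc : ∀ β β' : Fin p → ℝ, l0 (β - β') ≤ s →
      (ms / 2) * (norm2 (β - β')) ^ 2
          ≤ f β - f β' - ip (gradf β') (β - β') ∧
      f β - f β' - ip (gradf β') (β - β')
          ≤ (Ms / 2) * (norm2 (β - β')) ^ 2)
    (η : ℝ) (hη0 : 0 < η) (hη1 : η < 2 * ms / Ms ^ 2)
    (Θ : (Fin p → ℝ) → (Fin p → ℝ))
    (hΘ : ∀ y x : Fin p → ℝ, l0 x ≤ k → norm2 (Θ y - x) ≤ 1.62 * norm2 (y - x))
    (βstar βt : Fin p → ℝ) (hβstar : l0 βstar ≤ kstar) (hβt : l0 βt ≤ k)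
    (S : Finset (Fin p)) (hS : S = suppF βt ∪ suppF βstar)
    (βnext : Fin p → ℝ)
    (hβnext : βnext = Θ (βt - η • restr S (gradf βt)))
    (ρ : ℝ) (hρ : ρ = Real.sqrt (1 - 2 * η * ms + η ^ 2 * Ms ^ 2)) :
    norm2 (βnext - βstar)
        ≤ 1.62 * ρ * norm2 (βt - βstar)
          + 1.62 * η * Real.sqrt (s : ℝ) * normInf (gradf βstar) ∧
      ρ < 1 := by
  subst hs hS hβnext hρ
  have hMs : 0 < Ms := hms.trans_le hmM
  refine ⟨?_, sqrt_one_sub_two_mul_add_sq_lt_one hMs.ne' hη0 hη1⟩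
  set S := suppF βt ∪ suppF βstar
  have hS : S.card ≤ k + kstar := (card_union_le _ _).trans (add_le_add hβt hβstar)
  have h_step := RestrictedStrongConvexSmooth.norm2_sub_smul_restr_sub_le hrsc hms.le hMs
    hη0.le hS ((support_subset_suppF βt).trans (by simp [S]))
    ((support_subset_suppF βstar).trans (by simp [S]))
  have h_noise : norm2 (restr S (gradf βstar)) ≤ √(k + kstar : ℕ) * normInf (gradf βstar) :=
    (norm2_restr_le S _).trans
      (mul_le_mul_of_nonneg_right (Real.sqrt_le_sqrt (by exact_mod_cast hS)) (normInf_nonneg _))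
  calc norm2 (Θ (βt - η • restr S (gradf βt)) - βstar)
      ≤ 1.62 * norm2 (βt - η • restr S (gradf βt) - βstar) := hΘ _ _ (hβstar.trans hks)
    _ ≤ 1.62 * (√(1 - 2 * η * ms + η ^ 2 * Ms ^ 2) * norm2 (βt - βstar)
          + η * (√(k + kstar : ℕ) * normInf (gradf βstar))) := by
      gcongr; exact h_step.trans (by gcongr)
    _ = _ := by ring

/-- one step of hard-thresholded gradient descent contracts
towards any k*-sparse β* (Proposition 6 of the paper).  The hard-thresholding
operator Θ and its 1.62-approximation property are assumed as hypotheses. -/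
theorem iht_one_step_contraction
    (p k kstar s : ℕ) (hp : 0 < p) (hks : kstar ≤ k) (hs : s = k + kstar)
    (f : (Fin p → ℝ) → ℝ) (gradf : (Fin p → ℝ) → (Fin p → ℝ))
    (ms Ms : ℝ) (hms : 0 < ms) (hmM : ms ≤ Ms)
    (hrsc : ∀ β β' : Fin p → ℝ, l0 (β - β') ≤ s →
      (ms / 2) * (norm2 (β - β')) ^ 2
          ≤ f β - f β' - ip (gradf β') (β - β') ∧
      f β - f β' - ip (gradf β') (β - β')
          ≤ (Ms / 2) * (norm2 (β - β')) ^ 2)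
    (η : ℝ) (hη0 : 0 < η) (hη1 : η < 2 * ms / Ms ^ 2)
    (Θ : (Fin p → ℝ) → (Fin p → ℝ))
    (hΘ : ∀ y x : Fin p → ℝ, l0 x ≤ k → norm2 (Θ y - x) ≤ 1.62 * norm2 (y - x))
    (βstar βt : Fin p → ℝ) (hβstar : l0 βstar ≤ kstar) (hβt : l0 βt ≤ k)
    (S : Finset (Fin p)) (hS : S = suppF βt ∪ suppF βstar)
    (βnext : Fin p → ℝ)
    (hβnext : βnext = Θ (βt - η • restr S (gradf βt)))
    (ρ : ℝ) (hρ : ρ = Real.sqrt (1 - 2 * η * ms + η ^ 2 * Ms ^ 2)) :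
    norm2 (βnext - βstar)
        ≤ 1.62 * ρ * norm2 (βt - βstar)
          + 1.62 * η * Real.sqrt (s : ℝ) * normInf (gradf βstar) ∧
      ρ < 1 :=
  iht_one_step_contraction_general p k kstar s hks hs f gradf ms Ms hms hmM hrsc η hη0 hη1 Θ hΘ
    βstar βt hβstar hβt S hS βnext hβnext ρ hρ
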